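/- arXiv:2407.11285 — 6 statements merged into one kernel-verified Lean document; each statement's English description precedes it below -/
import Mathlib

section
/- In a projective rectangle of order (m,n), every special line has exactly n+1 points and every ordinary line has exactly m+1 points. -/
open scoped Classical

/-- A projective rectangle: an incidence structure satisfying axioms (A1)–(A6). -/
structure ProjRect (P L : Type*) where
  incid : P → L → Prop
  /-- (A4) the special point -/
  D : P
  /-- (A1) every two distinct points are incident with exactly one line -/
  A1 : ∀ p q : P, p ≠ q → ∃! l : L, incid p l ∧ incid q l
  /-- (A2) there exist four points with no three collinear -/
  A2 : ∃ p1 p2 p3 p4 : P, p1 ≠ p2 ∧ p1 ≠ p3 ∧ p1 ≠ p4 ∧ p2 ≠ p3 ∧ p2 ≠ p4 ∧ p3 ≠ p4 ∧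
    ∀ l : L, ¬(incid p1 l ∧ incid p2 l ∧ incid p3 l) ∧ ¬(incid p1 l ∧ incid p2 l ∧ incid p4 l) ∧
      ¬(incid p1 l ∧ incid p3 l ∧ incid p4 l) ∧ ¬(incid p2 l ∧ incid p3 l ∧ incid p4 l)
  /-- (A3) every line has at least three points -/
  A3 : ∀ l : L, ∃ p1 p2 p3 : P, p1 ≠ p2 ∧ p1 ≠ p3 ∧ p2 ≠ p3 ∧
    incid p1 l ∧ incid p2 l ∧ incid p3 l
  /-- (A5) each special line intersects every other line in exactly one point -/
  A5 : ∀ s l : L, incid D s → l ≠ s → ∃! p : P, incid p s ∧ incid p l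
  /-- (A6) Pasch-type axiom -/
  A6 : ∀ l1 l2 g h : L, ¬incid D l1 → ¬incid D l2 → (∃ p : P, incid p l1 ∧ incid p l2) →
    (∃ p1 p2 p3 p4 : P, p1 ≠ p2 ∧ p1 ≠ p3 ∧ p1 ≠ p4 ∧ p2 ≠ p3 ∧ p2 ≠ p4 ∧ p3 ≠ p4 ∧
      incid p1 g ∧ incid p1 l1 ∧ incid p2 g ∧ incid p2 l2 ∧
      incid p3 h ∧ incid p3 l1 ∧ incid p4 h ∧ incid p4 l2) →
    ∃ p : P, incid p g ∧ incid p h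

namespace ProjRect

variable {P L : Type*} (R : ProjRect P L)

/-- A line is special if it is incident with the special point `D`. -/
def SpecialLine (l : L) : Prop := R.incid R.D l

/-- A line is ordinary if it is not incident with `D`. -/
def OrdinaryLine (l : L) : Prop := ¬ R.incid R.D l

/-- A point is ordinary if it is not `D`. -/
def OrdinaryPoint (p : P) : Prop := p ≠ R.D

/-- The set of points of a line. -/
def points (l : L) : Set P := {p | R.incid p l}

/-- `R` has order `(m, n)`: there are `m+1` special lines, each with `n+1` points. -/
def HasOrder (m n : ℕ) : Prop :=
  {l : L | R.SpecialLine l}.ncard = m + 1 ∧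
  ∀ l : L, R.SpecialLine l → (R.points l).ncard = n + 1

/-- Nontrivial: there exist two disjoint ordinary lines (i.e. `R` is not a projective plane). -/
def Nontrivial : Prop :=
  ∃ l1 l2 : L, R.OrdinaryLine l1 ∧ R.OrdinaryLine l2 ∧ ∀ p : P, ¬(R.incid p l1 ∧ R.incid p l2)

/-- An incidence substructure `(Ps, Ls)` that is a projective plane. -/
def IsSubplane (Ps : Set P) (Ls : Set L) : Prop :=
  (∀ p ∈ Ps, ∀ q ∈ Ps, p ≠ q → ∃! l : L, l ∈ Ls ∧ R.incid p l ∧ R.incid q l) ∧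
  (∀ l ∈ Ls, ∀ l' ∈ Ls, l ≠ l' → ∃! p : P, p ∈ Ps ∧ R.incid p l ∧ R.incid p l') ∧
  (∀ l ∈ Ls, ∀ p : P, R.incid p l → p ∈ Ps) ∧
  (∃ p1 ∈ Ps, ∃ p2 ∈ Ps, ∃ p3 ∈ Ps, ∃ p4 ∈ Ps,
    p1 ≠ p2 ∧ p1 ≠ p3 ∧ p1 ≠ p4 ∧ p2 ≠ p3 ∧ p2 ≠ p4 ∧ p3 ≠ p4 ∧
    ∀ l ∈ Ls, ¬(R.incid p1 l ∧ R.incid p2 l ∧ R.incid p3 l) ∧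
      ¬(R.incid p1 l ∧ R.incid p2 l ∧ R.incid p4 l) ∧
      ¬(R.incid p1 l ∧ R.incid p3 l ∧ R.incid p4 l) ∧
      ¬(R.incid p2 l ∧ R.incid p3 l ∧ R.incid p4 l))

/-- A plane: a maximal subplane. -/
def IsPlane (Ps : Set P) (Ls : Set L) : Prop :=
  R.IsSubplane Ps Ls ∧
  ∀ Ps' Ls', R.IsSubplane Ps' Ls' → Ps ⊆ Ps' → Ls ⊆ Ls' → Ps = Ps' ∧ Ls = Ls'

/-- The graph of lines: vertices are the ordinary lines, adjacent iff they intersect. -/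
def lineGraph : SimpleGraph {l : L // R.OrdinaryLine l} where
  Adj l1 l2 := l1 ≠ l2 ∧ ∃ p : P, R.incid p l1.1 ∧ R.incid p l2.1
  symm := by
    constructor
    rintro a b ⟨hne, p, h1, h2⟩
    exact ⟨hne.symm, p, h2, h1⟩
  loopless := by
    constructor
    rintro a ⟨hne, -⟩
    exact hne rfl

end ProjRect

/-!
Joining a point of an ordinary line `l` to the special point `D` gives a bijection between
the points of `l` and the special lines: every such point lies on a unique special line by (A1),
and every special line meets `l` in a unique point by (A5).
-/

namespace ProjRect

variable {P L : Type*} (R : ProjRect P L)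

variable {R} in
lemma ne_D_of_incid_ordinaryLine {p : P} {l : L} (hl : R.OrdinaryLine l) (hp : R.incid p l) :
    p ≠ R.D := by
  rintro rfl
  exact hl hp

variable {R} in
lemma ne_of_ordinaryLine_of_specialLine {l s : L} (hl : R.OrdinaryLine l)
    (hs : R.SpecialLine s) : l ≠ s := by
  rintro rfl
  exact hl hs

lemma existsUnique_specialLine_incid {p : P} (hp : p ≠ R.D) :
    ∃! s : L, R.SpecialLine s ∧ R.incid p s := by
  obtain ⟨s, ⟨hps, hDs⟩, huniq⟩ := R.A1 p R.D hp
  exact ⟨s, ⟨hDs, hps⟩, fun t ⟨hDt, hpt⟩ => huniq t ⟨hpt, hDt⟩⟩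

lemma eq_of_incid_specialLine_of_incid_ordinaryLine {s l : L} (hs : R.SpecialLine s)
    (hl : R.OrdinaryLine l) {p q : P} (hps : R.incid p s) (hpl : R.incid p l)
    (hqs : R.incid q s) (hql : R.incid q l) : p = q :=
  (R.A5 s l hs (ne_of_ordinaryLine_of_specialLine hl hs)).unique ⟨hps, hpl⟩ ⟨hqs, hql⟩

theorem ncard_points_eq_ncard_specialLines {l : L} (hl : R.OrdinaryLine l) :
    (R.points l).ncard = {s : L | R.SpecialLine s}.ncard := by
  let join (p : P) (hp : p ∈ R.points l) : L :=
    (R.existsUnique_specialLine_incid (ne_D_of_incid_ordinaryLine hl hp)).choose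
  have join_spec (p : P) (hp : p ∈ R.points l) :
      R.SpecialLine (join p hp) ∧ R.incid p (join p hp) :=
    (R.existsUnique_specialLine_incid (ne_D_of_incid_ordinaryLine hl hp)).choose_spec.1
  refine Set.ncard_congr join (fun p hp => (join_spec p hp).1) ?_ ?_
  · intro p q hp hq hpq
    obtain ⟨hs, hps⟩ := join_spec p hp
    exact R.eq_of_incid_specialLine_of_incid_ordinaryLine hs hl hps hp
      (hpq ▸ (join_spec q hq).2) hq
  · intro s hs
    obtain ⟨p, ⟨hps, hpl⟩, -⟩ := R.A5 s l hs (ne_of_ordinaryLine_of_specialLine hl hs)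
    exact ⟨p, hpl, (R.existsUnique_specialLine_incid (ne_D_of_incid_ordinaryLine hl hpl)).unique
      (join_spec p hpl) ⟨hs, hps⟩⟩

end ProjRect

theorem stmt0_general {P L : Type*} (R : ProjRect P L) (m n : ℕ)
    (h : R.HasOrder m n) :
    (∀ l : L, R.SpecialLine l → (R.points l).ncard = n + 1) ∧
    (∀ l : L, R.OrdinaryLine l → (R.points l).ncard = m + 1) :=
  ⟨h.2, fun _ hl => (R.ncard_points_eq_ncard_specialLines hl).trans h.1⟩

/-- In a projective rectangle of order (m,n), every special line has exactly
n+1 points and every ordinary line has exactly m+1 points. -/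
theorem stmt0 {P L : Type*} [Fintype P] [Fintype L] (R : ProjRect P L) (m n : ℕ)
    (h : R.HasOrder m n) :
    (∀ l : L, R.SpecialLine l → (R.points l).ncard = n + 1) ∧
    (∀ l : L, R.OrdinaryLine l → (R.points l).ncard = m + 1) :=
  stmt0_general R m n h
end

section
/- A finite projective rectangle of order (m,n) has exactly n^2 ordinary lines and exactly (m+1)n ordinary points. -/
open scoped Classical

namespace ProjRect

variable {P L : Type*} (R : ProjRect P L)

lemma line_unique {p q : P} {l l' : L} (hpq : p ≠ q)
    (h1 : R.incid p l) (h2 : R.incid q l) (h3 : R.incid p l') (h4 : R.incid q l') :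
    l = l' := by
  obtain ⟨w, _, hu⟩ := R.A1 p q hpq
  rw [hu l ⟨h1, h2⟩, hu l' ⟨h3, h4⟩]

lemma special_inter {s1 s2 : L} (h1 : R.SpecialLine s1) (h2 : R.SpecialLine s2)
    (hne : s1 ≠ s2) {p : P} (hp1 : R.incid p s1) (hp2 : R.incid p s2) : p = R.D := by
  by_contra hpD
  exact hne (R.line_unique hpD hp1 h1 hp2 h2)

lemma two_special_aux {a b c : P} (ha : a ≠ R.D) (hb : b ≠ R.D) (hc : c ≠ R.D)
    (h : ∀ l : L, ¬(R.incid a l ∧ R.incid b l ∧ R.incid c l)) :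
    ∃ s1 s2 : L, R.SpecialLine s1 ∧ R.SpecialLine s2 ∧ s1 ≠ s2 := by
  obtain ⟨sa, hsa1, hsa2⟩ := (R.A1 a R.D ha).exists
  obtain ⟨sb, hsb1, hsb2⟩ := (R.A1 b R.D hb).exists
  obtain ⟨sc, hsc1, hsc2⟩ := (R.A1 c R.D hc).exists
  by_cases hab : sa = sb
  · refine ⟨sa, sc, hsa2, hsc2, ?_⟩
    rintro rfl
    exact h sa ⟨hsa1, hab ▸ hsb1, hsc1⟩
  · exact ⟨sa, sb, hsa2, hsb2, hab⟩

lemma two_special : ∃ s1 s2 : L, R.SpecialLine s1 ∧ R.SpecialLine s2 ∧ s1 ≠ s2 := by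
  obtain ⟨p1, p2, p3, p4, h12, h13, h14, h23, h24, h34, hcol⟩ := R.A2
  by_cases h1 : p1 = R.D
  · exact R.two_special_aux (h1 ▸ h12.symm) (h1 ▸ h13.symm) (h1 ▸ h14.symm)
      (fun l => (hcol l).2.2.2)
  by_cases h2 : p2 = R.D
  · exact R.two_special_aux (h2 ▸ h12) (h2 ▸ h23.symm) (h2 ▸ h24.symm)
      (fun l => (hcol l).2.2.1)
  by_cases h3 : p3 = R.D
  · exact R.two_special_aux (h3 ▸ h13) (h3 ▸ h23) (h3 ▸ h34.symm)
      (fun l => (hcol l).2.1)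
  · exact R.two_special_aux h1 h2 h3 (fun l => (hcol l).1)

/-- The unique point where a special line `s` meets another line `l`. -/
noncomputable def crossPt (s l : L) (hs : R.SpecialLine s) (hl : l ≠ s) : P :=
  (R.A5 s l hs hl).choose

lemma crossPt_mem_s (s l : L) (hs : R.SpecialLine s) (hl : l ≠ s) :
    R.incid (R.crossPt s l hs hl) s := (R.A5 s l hs hl).choose_spec.1.1

lemma crossPt_mem_l (s l : L) (hs : R.SpecialLine s) (hl : l ≠ s) :
    R.incid (R.crossPt s l hs hl) l := (R.A5 s l hs hl).choose_spec.1.2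

lemma crossPt_unique (s l : L) (hs : R.SpecialLine s) (hl : l ≠ s) {p : P}
    (h1 : R.incid p s) (h2 : R.incid p l) : p = R.crossPt s l hs hl :=
  (R.A5 s l hs hl).choose_spec.2 p ⟨h1, h2⟩

end ProjRect

/-- A finite projective rectangle of order (m,n) has exactly n^2 ordinary
lines and exactly (m+1)n ordinary points. -/
theorem stmt1 {P L : Type*} [Fintype P] [Fintype L] (R : ProjRect P L) (m n : ℕ)
    (h : R.HasOrder m n) :
    {l : L | R.OrdinaryLine l}.ncard = n ^ 2 ∧
    {p : P | R.OrdinaryPoint p}.ncard = (m + 1) * n := by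
  classical
  obtain ⟨hS, hptsc⟩ := h
  -- basic facts
  have hmemS : ∀ s : L, s ∈ {l : L | R.SpecialLine l}.toFinset ↔ R.SpecialLine s := by
    intro s; simp [Set.mem_toFinset]
  set S : Finset L := {l : L | R.SpecialLine l}.toFinset with hSdef
  have hScard : S.card = m + 1 := by
    rw [hSdef, ← Set.ncard_eq_toFinset_card']; exact hS
  have hDpts : ∀ s : L, R.SpecialLine s → R.D ∈ (R.points s).toFinset := by
    intro s hs
    rw [Set.mem_toFinset]
    exact hs
  have hFcard : ∀ s : L, R.SpecialLine s → ((R.points s).toFinset.erase R.D).card = n := by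
    intro s hs
    rw [Finset.card_erase_of_mem (hDpts s hs), ← Set.ncard_eq_toFinset_card', hptsc s hs]
    omega
  constructor
  · -- ordinary lines
    obtain ⟨s1, s2, hs1, hs2, hne⟩ := R.two_special
    have ne1 : ∀ l : L, R.OrdinaryLine l → l ≠ s1 := by
      intro l hl he; exact hl (by rw [he]; exact hs1)
    have ne2 : ∀ l : L, R.OrdinaryLine l → l ≠ s2 := by
      intro l hl he; exact hl (by rw [he]; exact hs2)
    have hmemOL : ∀ l : L, l ∈ {l : L | R.OrdinaryLine l}.toFinset ↔ R.OrdinaryLine l := by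
      intro l; simp [Set.mem_toFinset]
    have hcard : {l : L | R.OrdinaryLine l}.toFinset.card =
        (((R.points s1).toFinset.erase R.D) ×ˢ ((R.points s2).toFinset.erase R.D)).card := by
      refine Finset.card_bij
        (fun l hl => (R.crossPt s1 l hs1 (ne1 l ((hmemOL l).mp hl)),
                      R.crossPt s2 l hs2 (ne2 l ((hmemOL l).mp hl)))) ?_ ?_ ?_
      · intro l hl
        have hol := (hmemOL l).mp hl
        rw [Finset.mem_product]
        constructor
        · rw [Finset.mem_erase]
          refine ⟨?_, ?_⟩
          · intro hD
            exact hol (hD ▸ R.crossPt_mem_l s1 l hs1 (ne1 l hol))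
          · rw [Set.mem_toFinset]; exact R.crossPt_mem_s s1 l hs1 (ne1 l hol)
        · rw [Finset.mem_erase]
          refine ⟨?_, ?_⟩
          · intro hD
            exact hol (hD ▸ R.crossPt_mem_l s2 l hs2 (ne2 l hol))
          · rw [Set.mem_toFinset]; exact R.crossPt_mem_s s2 l hs2 (ne2 l hol)
      · intro l hl l' hl' heq
        have hol := (hmemOL l).mp hl
        have hol' := (hmemOL l').mp hl'
        rw [Prod.mk.injEq] at heq
        obtain ⟨h1, h2⟩ := heq
        set a := R.crossPt s1 l hs1 (ne1 l hol) with ha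
        set b := R.crossPt s2 l hs2 (ne2 l hol) with hb
        have hab : a ≠ b := by
          intro he
          have haD : a = R.D := R.special_inter hs1 hs2 hne
            (R.crossPt_mem_s s1 l hs1 (ne1 l hol))
            (he ▸ R.crossPt_mem_s s2 l hs2 (ne2 l hol))
          exact hol (haD ▸ R.crossPt_mem_l s1 l hs1 (ne1 l hol))
        refine R.line_unique hab (R.crossPt_mem_l s1 l hs1 (ne1 l hol))
          (R.crossPt_mem_l s2 l hs2 (ne2 l hol)) ?_ ?_
        · show R.incid a l'
          rw [h1]; exact R.crossPt_mem_l s1 l' hs1 (ne1 l' hol')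
        · show R.incid b l'
          rw [h2]; exact R.crossPt_mem_l s2 l' hs2 (ne2 l' hol')
      · rintro ⟨q1, q2⟩ hq
        rw [Finset.mem_product, Finset.mem_erase, Finset.mem_erase,
          Set.mem_toFinset, Set.mem_toFinset] at hq
        obtain ⟨⟨hq1D, hq1⟩, hq2D, hq2⟩ := hq
        have hq1s1 : R.incid q1 s1 := hq1
        have hq2s2 : R.incid q2 s2 := hq2
        have hq12 : q1 ≠ q2 := by
          intro he
          exact hq1D (R.special_inter hs1 hs2 hne hq1s1 (he ▸ hq2s2))
        obtain ⟨l, hl1, hl2⟩ := (R.A1 q1 q2 hq12).exists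
        have hol : R.OrdinaryLine l := by
          intro hDl
          have hls1 : l = s1 := R.line_unique hq1D hl1 hDl hq1s1 hs1
          exact hq2D (R.special_inter hs1 hs2 hne (hls1 ▸ hl2) hq2s2)
        refine ⟨l, (hmemOL l).mpr hol, ?_⟩
        rw [Prod.mk.injEq]
        exact ⟨(R.crossPt_unique s1 l hs1 (ne1 l hol) hq1s1 hl1).symm,
               (R.crossPt_unique s2 l hs2 (ne2 l hol) hq2s2 hl2).symm⟩
    rw [Set.ncard_eq_toFinset_card', hcard, Finset.card_product,
      hFcard s1 hs1, hFcard s2 hs2, sq]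
  · -- ordinary points
    have hunion : {p : P | R.OrdinaryPoint p}.toFinset =
        S.biUnion (fun s => (R.points s).toFinset.erase R.D) := by
      ext p
      rw [Set.mem_toFinset, Finset.mem_biUnion]
      constructor
      · intro hp
        have hp' : p ≠ R.D := hp
        obtain ⟨s, hps, hDs⟩ := (R.A1 p R.D hp').exists
        refine ⟨s, (hmemS s).mpr hDs, ?_⟩
        rw [Finset.mem_erase, Set.mem_toFinset]
        exact ⟨hp', hps⟩
      · rintro ⟨s, _, hps⟩
        rw [Finset.mem_erase] at hps
        exact hps.1
    have hdisj : ∀ x ∈ S, ∀ y ∈ S, x ≠ y →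
        Disjoint ((R.points x).toFinset.erase R.D) ((R.points y).toFinset.erase R.D) := by
      intro x hx y hy hxy
      rw [Finset.disjoint_left]
      intro p hpx hpy
      rw [Finset.mem_erase, Set.mem_toFinset] at hpx hpy
      exact hpx.1 (R.special_inter ((hmemS x).mp hx) ((hmemS y).mp hy) hxy hpx.2 hpy.2)
    rw [Set.ncard_eq_toFinset_card', hunion, Finset.card_biUnion hdisj]
    rw [Finset.sum_congr rfl (fun s hs => hFcard s ((hmemS s).mp hs)),
      Finset.sum_const, hScard, smul_eq_mul]
end

section
/- In a finite projective rectangle of order (m,n), each ordinary point is incident with exactly n ordinary lines. -/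
open scoped Classical

/-!
Fix a special line `s` missing the ordinary point `p`. Every ordinary line through `p` meets `s`
in exactly one point other than `D` (A5), and conversely every point `q ≠ D` of `s` lies on
exactly one line through `p`, which is ordinary because the only special line through `q` is `s`.
So the ordinary lines through `p` correspond to the `n` points of `s` other than `D`.
-/

namespace ProjRect

variable {P L : Type*} (R : ProjRect P L)

theorem eq_of_incid_of_incid {p q : P} (hpq : p ≠ q) {l l' : L} (hpl : R.incid p l)
    (hql : R.incid q l) (hpl' : R.incid p l') (hql' : R.incid q l') : l = l' :=
  (R.A1 p q hpq).unique ⟨hpl, hql⟩ ⟨hpl', hql'⟩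

theorem exists_not_incid (l : L) : ∃ q : P, ¬ R.incid q l := by
  obtain ⟨p₁, p₂, p₃, _, -, -, -, -, -, -, hnc⟩ := R.A2
  by_contra! hall
  exact (hnc l).1 ⟨hall p₁, hall p₂, hall p₃⟩

theorem exists_specialLine_not_incid {p : P} (hp : R.OrdinaryPoint p) :
    ∃ s : L, R.SpecialLine s ∧ ¬ R.incid p s := by
  obtain ⟨l, ⟨hpl, hDl⟩, -⟩ := R.A1 p R.D hp
  obtain ⟨q, hql⟩ := R.exists_not_incid l
  have hqD : q ≠ R.D := fun h => hql (h ▸ hDl)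
  obtain ⟨s, ⟨hDs, hqs⟩, -⟩ := R.A1 R.D q hqD.symm
  refine ⟨s, hDs, fun hps => hql ?_⟩
  rwa [R.eq_of_incid_of_incid hp hpl hDl hps hDs]

theorem ncard_ordinaryLine_incid_eq {p : P} {s : L} (hs : R.SpecialLine s)
    (hps : ¬ R.incid p s) :
    {l : L | R.OrdinaryLine l ∧ R.incid p l}.ncard = (R.points s \ {R.D}).ncard := by
  have hne : ∀ l : L, R.incid p l → l ≠ s := fun l hpl h => hps (h ▸ hpl)
  let meet (l : L) (hl : l ∈ {l : L | R.OrdinaryLine l ∧ R.incid p l}) : P :=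
    (R.A5 s l hs (hne l hl.2)).exists.choose
  have meet_spec (l : L) (hl) : R.incid (meet l hl) s ∧ R.incid (meet l hl) l :=
    (R.A5 s l hs (hne l hl.2)).exists.choose_spec
  refine Set.ncard_congr meet ?_ ?_ ?_
  · intro l hl
    refine ⟨(meet_spec l hl).1, fun hD => hl.1 ?_⟩
    rw [← Set.mem_singleton_iff.mp hD]
    exact (meet_spec l hl).2
  · intro l₁ l₂ hl₁ hl₂ heq
    have hpq : p ≠ meet l₁ hl₁ := fun h => hps (h ▸ (meet_spec l₁ hl₁).1)
    exact R.eq_of_incid_of_incid hpq hl₁.2 (meet_spec l₁ hl₁).2 hl₂.2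
      (heq ▸ (meet_spec l₂ hl₂).2)
  · rintro q ⟨hqs, hqD : q ≠ R.D⟩
    have hpq : p ≠ q := fun h => hps (h ▸ hqs)
    obtain ⟨l, ⟨hpl, hql⟩, -⟩ := R.A1 p q hpq
    have hl : R.OrdinaryLine l := fun hDl =>
      hps (R.eq_of_incid_of_incid hqD.symm hDl hql hs hqs ▸ hpl)
    exact ⟨l, ⟨hl, hpl⟩, (R.A5 s l hs (hne l hpl)).unique (meet_spec l ⟨hl, hpl⟩) ⟨hqs, hql⟩⟩

end ProjRect

theorem stmt2_general {P L : Type*} (R : ProjRect P L) (m n : ℕ)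
    (h : R.HasOrder m n) :
    ∀ p : P, R.OrdinaryPoint p → {l : L | R.OrdinaryLine l ∧ R.incid p l}.ncard = n := by
  intro p hp
  obtain ⟨s, hs, hps⟩ := R.exists_specialLine_not_incid hp
  have hcard : (R.points s).ncard = n + 1 := h.2 s hs
  have hD : R.D ∈ R.points s := hs
  rw [R.ncard_ordinaryLine_incid_eq hs hps, Set.ncard_sdiff_singleton_of_mem hD, hcard,
    Nat.add_sub_cancel]

/-- In a finite projective rectangle of order (m,n), each ordinary point
is incident with exactly n ordinary lines. -/
theorem stmt2 {P L : Type*} [Fintype P] [Fintype L] (R : ProjRect P L) (m n : ℕ)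
    (h : R.HasOrder m n) :
    ∀ p : P, R.OrdinaryPoint p → {l : L | R.OrdinaryLine l ∧ R.incid p l}.ncard = n :=
  stmt2_general R m n h
end

section
/- In a finite projective rectangle of order (m,n), every maximal subplane (projective plane incidence substructure) has order m, hence contains m(m+1) ordinary points and m^2 ordinary lines. -/
open scoped Classical

/-!
A subplane `(Ps, Ls)` contains every point of each of its lines, so an ordinary line of the
subplane carries all `m + 1` points that it has in the rectangle, one on each special line;
hence the subplane has order `m`. If `D` were not in the subplane, the `m² + m + 1` points of
the subplane would lie on pairwise distinct special lines, of which there are only `m + 1`.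
So `D` is a point of the subplane: removing it leaves `m(m + 1)` ordinary points, and removing
the `m + 1` lines through it leaves `m²` ordinary lines.
-/

namespace ProjRect

variable {P L : Type*} {R : ProjRect P L} {Ps : Set P} {Ls : Set L} {m n : ℕ}

theorem line_eq_of_incid (R : ProjRect P L) {p q : P} {l l' : L} (hpq : p ≠ q)
    (hpl : R.incid p l) (hql : R.incid q l) (hpl' : R.incid p l') (hql' : R.incid q l') :
    l = l' :=
  (R.A1 p q hpq).unique ⟨hpl, hql⟩ ⟨hpl', hql'⟩

theorem ordinaryPoint_of_incid {l : L} (hl : R.OrdinaryLine l) {p : P} (hp : R.incid p l) :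
    R.OrdinaryPoint p := by
  rintro rfl
  exact hl hp

theorem exists_specialLine_incid (R : ProjRect P L) (p : P) :
    ∃ s, R.SpecialLine s ∧ R.incid p s := by
  obtain ⟨q, hq⟩ : ∃ q, q ≠ R.D := by
    obtain ⟨p₁, p₂, _, _, h₁₂, -⟩ := R.A2
    by_cases h : p₁ = R.D
    exacts [⟨p₂, h ▸ h₁₂.symm⟩, ⟨p₁, h⟩]
  by_cases hp : p = R.D
  · obtain ⟨s, ⟨-, hDs⟩, -⟩ := R.A1 q R.D hq
    exact ⟨s, hDs, hp ▸ hDs⟩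
  · obtain ⟨s, ⟨hps, hDs⟩, -⟩ := R.A1 p R.D hp
    exact ⟨s, hDs, hps⟩

theorem ncard_points_of_ordinaryLine (h : R.HasOrder m n) {l : L} (hl : R.OrdinaryLine l) :
    (R.points l).ncard = m + 1 := by
  have hne : ∀ s, R.SpecialLine s → l ≠ s := fun s hs hls => hl (hls ▸ hs : R.incid R.D l)
  rw [← h.1]
  refine (Set.ncard_congr (fun s hs => (R.A5 s l hs (hne s hs)).exists.choose) ?_ ?_ ?_).symm
  · exact fun s hs => (R.A5 s l hs (hne s hs)).exists.choose_spec.2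
  · intro s s' hs hs' hss'
    have hx := (R.A5 s l hs (hne s hs)).exists.choose_spec
    have hx' := (R.A5 s' l hs' (hne s' hs')).exists.choose_spec
    rw [← hss'] at hx'
    exact R.line_eq_of_incid (ordinaryPoint_of_incid hl hx.2) hx.1 hs hx'.1 hs'
  · intro p hp
    obtain ⟨s, ⟨hps, hDs⟩, -⟩ := R.A1 p R.D (ordinaryPoint_of_incid hl hp)
    exact ⟨s, hDs, (R.A5 s l hDs (hne s hDs)).unique
      (R.A5 s l hDs (hne s hDs)).exists.choose_spec ⟨hps, hp⟩⟩

abbrev subIncidence (R : ProjRect P L) (Ps : Set P) (Ls : Set L) : Membership Ps Ls :=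
  ⟨fun l p => R.incid p l⟩

namespace IsSubplane

variable (hsub : R.IsSubplane Ps Ls)
include hsub

theorem mem_of_incid {l : L} (hl : l ∈ Ls) {p : P} (hp : R.incid p l) : p ∈ Ps :=
  hsub.2.2.1 l hl p hp

theorem mem_lines_of_incid {p q : P} (hp : p ∈ Ps) (hq : q ∈ Ps) (hpq : p ≠ q) {l : L}
    (hpl : R.incid p l) (hql : R.incid q l) : l ∈ Ls := by
  obtain ⟨l', ⟨hl', hpl', hql'⟩, -⟩ := hsub.1 p hp q hq hpq
  rwa [R.line_eq_of_incid hpq hpl hql hpl' hql']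

theorem exists_not_incid_point {l : L} (hl : l ∈ Ls) : ∃ p ∈ Ps, ¬R.incid p l := by
  obtain ⟨a, ha, b, hb, c, hc, _, -, -, -, -, -, -, -, hgen⟩ := hsub.2.2.2
  by_contra! hall
  exact (hgen l hl).1 ⟨hall a ha, hall b hb, hall c hc⟩

theorem exists_not_incid_line (p : P) : ∃ l ∈ Ls, ¬R.incid p l := by
  obtain ⟨a, ha, b, hb, c, hc, _, -, hab, hac, -, hbc, -, -, hgen⟩ := hsub.2.2.2
  obtain ⟨lab, ⟨hlab, hab_a, hab_b⟩, -⟩ := hsub.1 a ha b hb hab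
  obtain ⟨lac, ⟨hlac, hac_a, hac_c⟩, -⟩ := hsub.1 a ha c hc hac
  obtain ⟨lbc, ⟨hlbc, hbc_b, hbc_c⟩, -⟩ := hsub.1 b hb c hc hbc
  by_contra! hall
  by_cases hpa : p = a
  · exact (hgen lbc hlbc).1 ⟨hpa ▸ hall lbc hlbc, hbc_b, hbc_c⟩
  · have := R.line_eq_of_incid hpa (hall lab hlab) hab_a (hall lac hlac) hac_a
    exact (hgen lab hlab).1 ⟨hab_a, hab_b, this ▸ hac_c⟩

@[reducible] noncomputable def projectivePlane :
    @Configuration.ProjectivePlane Ps Ls (R.subIncidence Ps Ls) :=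
  letI := R.subIncidence Ps Ls
  { exists_point := fun l => by
      obtain ⟨p, hp, hpl⟩ := hsub.exists_not_incid_point l.2
      exact ⟨⟨p, hp⟩, hpl⟩
    exists_line := fun p => by
      obtain ⟨l, hl, hpl⟩ := hsub.exists_not_incid_line p.1
      exact ⟨⟨l, hl⟩, hpl⟩
    eq_or_eq := fun {p q _ _} hpl hql hpl' hql' => by
      by_cases hpq : p = q
      · exact Or.inl hpq
      · exact Or.inr (Subtype.ext
          (R.line_eq_of_incid (Subtype.coe_ne_coe.mpr hpq) hpl hql hpl' hql'))
    mkPoint := fun {l l'} hll' =>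
      ⟨_, (hsub.2.1 l l.2 l' l'.2 (Subtype.coe_ne_coe.mpr hll')).exists.choose_spec.1⟩
    mkPoint_ax := fun {l l'} hll' =>
      (hsub.2.1 l l.2 l' l'.2 (Subtype.coe_ne_coe.mpr hll')).exists.choose_spec.2
    mkLine := fun {p q} hpq =>
      ⟨_, (hsub.1 p p.2 q q.2 (Subtype.coe_ne_coe.mpr hpq)).exists.choose_spec.1⟩
    mkLine_ax := fun {p q} hpq =>
      (hsub.1 p p.2 q q.2 (Subtype.coe_ne_coe.mpr hpq)).exists.choose_spec.2
    exists_config := by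
      obtain ⟨a, ha, b, hb, c, hc, d, hd, hab, hac, -, -, -, hcd, hgen⟩ := hsub.2.2.2
      obtain ⟨lab, ⟨hlab, hab_a, hab_b⟩, -⟩ := hsub.1 a ha b hb hab
      obtain ⟨lac, ⟨hlac, hac_a, hac_c⟩, -⟩ := hsub.1 a ha c hc hac
      obtain ⟨lcd, ⟨hlcd, hcd_c, hcd_d⟩, -⟩ := hsub.1 c hc d hd hcd
      refine ⟨⟨d, hd⟩, ⟨a, ha⟩, ⟨b, hb⟩, ⟨lcd, hlcd⟩, ⟨lab, hlab⟩, ⟨lac, hlac⟩,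
        fun h => (hgen lab hlab).2.1 ⟨hab_a, hab_b, h⟩,
        fun h => (hgen lac hlac).2.2.1 ⟨hac_a, hac_c, h⟩,
        fun h => (hgen lcd hlcd).2.2.1 ⟨h, hcd_c, hcd_d⟩, hab_a, hac_a,
        fun h => (hgen lcd hlcd).2.2.2 ⟨h, hcd_c, hcd_d⟩, hab_b,
        fun h => (hgen lac hlac).1 ⟨hac_a, h, hac_c⟩⟩ }

noncomputable def order : ℕ :=
  @Configuration.ProjectivePlane.order Ps Ls (R.subIncidence Ps Ls) hsub.projectivePlane

variable [Finite P] [Finite L]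

theorem ncard_incid_points {l : L} (hl : l ∈ Ls) :
    {p ∈ Ps | R.incid p l}.ncard = hsub.order + 1 := by
  let _ := R.subIncidence Ps Ls
  let _ := hsub.projectivePlane
  rw [← Nat.card_coe_set_eq]
  exact (Nat.card_congr (Equiv.subtypeSubtypeEquivSubtypeInter (· ∈ Ps) (R.incid · l)).symm).trans
    (Configuration.ProjectivePlane.pointCount_eq Ps (⟨l, hl⟩ : Ls))

theorem ncard_incid_lines {p : P} (hp : p ∈ Ps) :
    {l ∈ Ls | R.incid p l}.ncard = hsub.order + 1 := by
  let _ := R.subIncidence Ps Ls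
  let _ := hsub.projectivePlane
  rw [← Nat.card_coe_set_eq]
  exact (Nat.card_congr (Equiv.subtypeSubtypeEquivSubtypeInter (· ∈ Ls) (R.incid p ·)).symm).trans
    (Configuration.ProjectivePlane.lineCount_eq Ls (⟨p, hp⟩ : Ps))

theorem ncard_points : Ps.ncard = hsub.order ^ 2 + hsub.order + 1 := by
  let _ := R.subIncidence Ps Ls
  let _ := hsub.projectivePlane
  have := Fintype.ofFinite Ps
  rw [← Nat.card_coe_set_eq, Nat.card_eq_fintype_card]
  exact Configuration.ProjectivePlane.card_points Ps Ls

theorem ncard_lines : Ls.ncard = hsub.order ^ 2 + hsub.order + 1 := by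
  let _ := R.subIncidence Ps Ls
  let _ := hsub.projectivePlane
  have := Fintype.ofFinite Ls
  rw [← Nat.card_coe_set_eq, Nat.card_eq_fintype_card]
  exact Configuration.ProjectivePlane.card_lines Ps Ls

theorem one_lt_order : 1 < hsub.order :=
  @Configuration.ProjectivePlane.one_lt_order Ps Ls (R.subIncidence Ps Ls) hsub.projectivePlane _ _

theorem order_eq (h : R.HasOrder m n) : hsub.order = m := by
  obtain ⟨l, hl, hl_ord⟩ := hsub.exists_not_incid_line R.D
  have hcard := hsub.ncard_incid_points hl
  have hpoints : {p ∈ Ps | R.incid p l} = R.points l :=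
    Set.ext fun p => ⟨And.right, fun hp => ⟨hsub.mem_of_incid hl hp, hp⟩⟩
  rw [hpoints, ncard_points_of_ordinaryLine h hl_ord] at hcard
  omega

theorem special_mem (h : R.HasOrder m n) : R.D ∈ Ps := by
  by_contra hD
  choose f hf_special hf_incid using R.exists_specialLine_incid
  -- two points of the subplane on one special line would put that line, hence `D`, into it
  have hinj : Set.InjOn f Ps := fun p hp q hq hfpq => by
    by_contra hpq
    have hline := hsub.mem_lines_of_incid hp hq hpq (hf_incid p) (hfpq ▸ hf_incid q)
    exact hD (hsub.mem_of_incid hline (hf_special p))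
  have hle := Set.ncard_le_ncard_of_injOn f (t := {s | R.SpecialLine s})
    (fun p _ => hf_special p) hinj
  have hm := hsub.one_lt_order
  rw [hsub.ncard_points, h.1] at hle
  rw [hsub.order_eq h] at hle hm
  nlinarith

theorem ncard_specialLines (h : R.HasOrder m n) : {l ∈ Ls | R.SpecialLine l}.ncard = m + 1 :=
  hsub.order_eq h ▸ hsub.ncard_incid_lines (hsub.special_mem h)

end IsSubplane

end ProjRect

/-- In a finite projective rectangle of order (m,n), every maximal subplane has
order m, hence m(m+1) ordinary points and m^2 ordinary lines. -/
theorem stmt6 {P L : Type*} [Fintype P] [Fintype L] (R : ProjRect P L) (m n : ℕ)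
    (h : R.HasOrder m n) (Ps : Set P) (Ls : Set L) (hpl : R.IsPlane Ps Ls) :
    (∀ l ∈ Ls, {p ∈ Ps | R.incid p l}.ncard = m + 1) ∧
    {p ∈ Ps | R.OrdinaryPoint p}.ncard = m * (m + 1) ∧
    {l ∈ Ls | R.OrdinaryLine l}.ncard = m ^ 2 := by
  obtain ⟨hsub, -⟩ := hpl
  have hm := hsub.order_eq h
  refine ⟨fun l hl => hm ▸ hsub.ncard_incid_points hl, ?_, ?_⟩
  · change (Ps \ {R.D}).ncard = _
    rw [Set.ncard_sdiff_singleton_of_mem (hsub.special_mem h), hsub.ncard_points, hm,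
      Nat.add_sub_cancel]
    ring
  · have hsplit := Set.ncard_inter_add_ncard_sdiff_eq_ncard Ls {l | R.SpecialLine l}
    change {l ∈ Ls | R.SpecialLine l}.ncard + {l ∈ Ls | R.OrdinaryLine l}.ncard = _ at hsplit
    rw [hsub.ncard_specialLines h, hsub.ncard_lines, hm] at hsplit
    omega
end

section
/- The graph of lines of the narrow projective rectangle L_2^k is isomorphic to the bilinear forms graph H_2(2,k), whose vertices are the 2×k matrices over F_2 with two matrices adjacent iff their difference has rank 1. -/
open scoped Classical

/-- The ordinary line of the projective rectangle `L_2^k` indexed by `(g,h) ∈ 𝔽₂ᵏ × 𝔽₂ᵏ`: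
the set `{a_g, b_{g+h}, c_h}`, where the ordinary ground set is encoded as
`Fin 3 × (Fin k → ZMod 2)` (first coordinate 0 for `A`, 1 for `B`, 2 for `C`). -/
def L2kLine (k : ℕ) (gh : (Fin k → ZMod 2) × (Fin k → ZMod 2)) :
    Set (Fin 3 × (Fin k → ZMod 2)) :=
  {(0, gh.1), (1, gh.1 + gh.2), (2, gh.2)}

/-- The graph of lines of `L_2^k`: vertices are the ordinary lines, two adjacent iff they
share a point. -/
def L2kGraph (k : ℕ) : SimpleGraph ((Fin k → ZMod 2) × (Fin k → ZMod 2)) where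
  Adj x y := x ≠ y ∧ (L2kLine k x ∩ L2kLine k y).Nonempty
  symm := by
    constructor
    rintro a b ⟨h, p, hp1, hp2⟩
    exact ⟨h.symm, p, hp2, hp1⟩
  loopless := ⟨fun a ha => ha.1 rfl⟩

/-- The bilinear forms graph `H_q(2,k)` over a field `F` (with `q = |F|`): vertices are the
`2 × k` matrices over `F`, two adjacent iff their difference has rank 1. -/
def bilinFormsGraph (F : Type*) [Field F] (k : ℕ) : SimpleGraph (Matrix (Fin 2) (Fin k) F) where
  Adj M N := M ≠ N ∧ (M - N).rank = 1
  symm := by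
    constructor
    rintro M N ⟨h, hr⟩
    refine ⟨h.symm, ?_⟩
    rw [show N - M = -(M - N) by abel]
    have hneg : (-(M - N)).rank = (M - N).rank := by
      unfold Matrix.rank
      rw [show (-(M - N)).mulVecLin = -((M - N).mulVecLin) by
            ext v; simp [Matrix.neg_mulVec], LinearMap.range_neg]
    rw [hneg]; exact hr
  loopless := ⟨fun M hM => hM.1 rfl⟩

/-!
Send the ordinary line indexed by `(g, h)` to the matrix with rows `g` and `h`. Two lines meet iff
the difference `(u, v)` of their indices has `u = 0`, `v = 0` or `u + v = 0`, and in characteristic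
two the last condition is `u = v`. Over `𝔽₂` these three cases are exactly the linear dependences
of the rows `u, v`, so for distinct lines they say that the difference matrix has rank one.
-/

open Module Submodule

theorem finrank_span_pair_eq_one_iff {K V : Type*} [Field K] [AddCommGroup V] [Module K V]
    {u v : V} :
    finrank K (span K {u, v}) = 1 ↔ (u ≠ 0 ∨ v ≠ 0) ∧ ¬LinearIndependent K ![u, v] := by
  have hle : finrank K (span K {u, v}) ≤ 2 := by
    have h := finrank_range_le_card (R := K) ![u, v]
    rwa [Matrix.range_cons_cons_empty, Fintype.card_fin] at h
  have hli : LinearIndependent K ![u, v] ↔ finrank K (span K {u, v}) = 2 := by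
    rw [linearIndependent_iff_card_eq_finrank_span, Matrix.range_cons_cons_empty, Set.finrank,
      Fintype.card_fin, eq_comm]
  have hzero : finrank K (span K {u, v}) = 0 ↔ u = 0 ∧ v = 0 := by
    have := FiniteDimensional.span_of_finite K (Set.toFinite {u, v})
    rw [Submodule.finrank_eq_zero, span_eq_bot]
    simp
  rw [hli, ← not_and_or, ← hzero]
  omega

theorem Matrix.rank_of_two_rows_eq_one_iff {K : Type*} [Field K] {n : Type*} [Fintype n]
    {u v : n → K} :
    (Matrix.of ![u, v]).rank = 1 ↔ (u ≠ 0 ∨ v ≠ 0) ∧ ¬LinearIndependent K ![u, v] := by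
  rw [rank_eq_finrank_span_row, ← finrank_span_pair_eq_one_iff, ← Matrix.range_cons_cons_empty]
  rfl

theorem linearIndependent_pair_zmod_two_iff {V : Type*} [AddCommGroup V] [Module (ZMod 2) V]
    {u v : V} :
    LinearIndependent (ZMod 2) ![u, v] ↔ u ≠ 0 ∧ v ≠ 0 ∧ u ≠ v := by
  by_cases hu : u = 0
  · simp only [hu, ne_eq, not_true_eq_false, false_and, iff_false]
    exact fun h => h.ne_zero 0 rfl
  · rw [LinearIndependent.pair_iff' hu]
    constructor
    · intro h
      exact ⟨hu, fun hv => h 0 (by simp [hv]), fun huv => h 1 (by simp [huv])⟩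
    · rintro ⟨-, hv, huv⟩ a
      obtain rfl | rfl : a = 0 ∨ a = 1 := by decide +revert
      · simpa using hv.symm
      · simpa using huv

theorem L2kLine_inter_nonempty_iff {k : ℕ} {x y : (Fin k → ZMod 2) × (Fin k → ZMod 2)} :
    (L2kLine k x ∩ L2kLine k y).Nonempty ↔
      x.1 = y.1 ∨ x.1 + x.2 = y.1 + y.2 ∨ x.2 = y.2 := by
  constructor
  · rintro ⟨p, hp1, hp2⟩
    simp only [L2kLine, Set.mem_insert_iff, Set.mem_singleton_iff] at hp1 hp2
    rcases hp1 with rfl | rfl | rfl <;> rcases hp2 with h | h | h <;>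
      simp_all [Prod.ext_iff, Fin.ext_iff]
  · rintro (h | h | h)
    · exact ⟨(0, x.1), by simp [L2kLine], by simp [L2kLine, h]⟩
    · exact ⟨(1, x.1 + x.2), by simp [L2kLine], by simp [L2kLine, h]⟩
    · exact ⟨(2, x.2), by simp [L2kLine], by simp [L2kLine, h]⟩

/-- The graph of lines of `L_2^k` is isomorphic to the bilinear forms graph
`H_2(2,k)`. -/
theorem stmt15 (k : ℕ) :
    Nonempty (L2kGraph k ≃g bilinFormsGraph (ZMod 2) k) := by
  refine ⟨⟨(finTwoArrowEquiv _).symm.trans Matrix.of, fun {x y} => ?_⟩⟩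
  have hsub : Matrix.of ![x.1, x.2] - Matrix.of ![y.1, y.2] =
      Matrix.of ![x.1 - y.1, x.2 - y.2] := by
    ext i; fin_cases i <;> rfl
  show (_ ∧ _) ↔ (_ ∧ _)
  rw [Equiv.injective _ |>.ne_iff]
  refine and_congr_right fun hxy => ?_
  rw [Ne, Prod.ext_iff] at hxy
  simp only [Equiv.trans_apply, finTwoArrowEquiv_symm_apply]
  rw [hsub, Matrix.rank_of_two_rows_eq_one_iff, linearIndependent_pair_zmod_two_iff,
    L2kLine_inter_nonempty_iff]
  simp only [ne_eq, sub_eq_zero]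
  rw [sub_eq_sub_iff_sub_eq_sub, ZModModule.sub_eq_add, ZModModule.sub_eq_add]
  tauto
end

section
/- The graph of lines of the projective rectangle L_2^2 (order (2,4), 16 vertices, 9-regular, strongly regular with λ=4, μ=6) is isomorphic to the tensor (categorical) product K_4 × K_4 of two complete graphs on 4 vertices. -/
/-!
Identify `𝔽₂²` with `𝔽₄ = 𝔽₂(ω)`. Two ordinary lines `(g, h)`, `(g', h')` meet iff their
difference `(d, e) ≠ 0` has `d = 0`, `e = 0` or `d = e`, i.e. iff `d² + d e + e² ≠ 0`: on a
nonzero `d` this is `t² + t + 1 ≠ 0` for `t = e / d`, and in `𝔽₄` the roots of `t² + t + 1` are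
exactly the elements outside `𝔽₂`. The `𝔽₄`-linear map `(g, h) ↦ (h + ω g, h + ω² g)` factors the
norm form, so it carries meeting lines to pairs differing in both coordinates: `K₄ × K₄`.
-/

open scoped Classical

/-- The tensor (categorical) product of two simple graphs. -/
def tensorProd {α β : Type*} (G : SimpleGraph α) (H : SimpleGraph β) :
    SimpleGraph (α × β) where
  Adj p q := G.Adj p.1 q.1 ∧ H.Adj p.2 q.2
  symm := ⟨fun _ _ h => ⟨h.1.symm, h.2.symm⟩⟩
  loopless := ⟨fun p hp => G.loopless.irrefl p.1 hp.1⟩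

def tensorProd.congr {α α' β β' : Type*} {G : SimpleGraph α} {G' : SimpleGraph α'}
    {H : SimpleGraph β} {H' : SimpleGraph β'} (e₁ : G ≃g G') (e₂ : H ≃g H') :
    tensorProd G H ≃g tensorProd G' H' where
  toEquiv := e₁.toEquiv.prodCongr e₂.toEquiv
  map_rel_iff' := and_congr e₁.map_adj_iff e₂.map_adj_iff

-- The ordinary lines `{a_g, b_{g+h}, c_h}` of the projective rectangle over a group `V`,
-- two of which meet iff they agree in `g`, `g + h` or `h`.
def rectLineGraph (V : Type*) [AddCommGroup V] : SimpleGraph (V × V) where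
  Adj x y := x ≠ y ∧ (x.1 = y.1 ∨ x.1 + x.2 = y.1 + y.2 ∨ x.2 = y.2)
  symm := ⟨fun _ _ ⟨hne, h⟩ => ⟨hne.symm, by rcases h with h | h | h <;> simp [h]⟩⟩
  loopless := ⟨fun _ h => h.1 rfl⟩

lemma L2kGraph_eq_rectLineGraph (k : ℕ) : L2kGraph k = rectLineGraph (Fin k → ZMod 2) := by
  ext x y
  refine ⟨fun ⟨hne, p, hx, hy⟩ => ⟨hne, ?_⟩, fun ⟨hne, h⟩ => ⟨hne, ?_⟩⟩
  · simp only [L2kLine, Set.mem_insert_iff, Set.mem_singleton_iff, Prod.ext_iff] at hx hy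
    rcases hx with ⟨hx, hx'⟩ | ⟨hx, hx'⟩ | ⟨hx, hx'⟩ <;>
      rcases hy with ⟨hy, hy'⟩ | ⟨hy, hy'⟩ | ⟨hy, hy'⟩ <;> simp_all
  · rcases h with h | h | h
    · exact ⟨(0, x.1), by simp [L2kLine], by simp [L2kLine, h]⟩
    · exact ⟨(1, x.1 + x.2), by simp [L2kLine], by simp [L2kLine, h]⟩
    · exact ⟨(2, x.2), by simp [L2kLine], by simp [L2kLine, h]⟩

namespace rectLineGraph

variable {V W : Type*} [AddCommGroup V] [AddCommGroup W]

lemma adj_iff_sub (x y : V × V) :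
    (rectLineGraph V).Adj x y ↔
      x - y ≠ 0 ∧ ((x - y).1 = 0 ∨ (x - y).1 + (x - y).2 = 0 ∨ (x - y).2 = 0) := by
  simp only [rectLineGraph, sub_ne_zero, Prod.fst_sub, Prod.snd_sub, sub_eq_zero,
    sub_add_sub_comm]

def congr (ψ : V ≃+ W) : rectLineGraph V ≃g rectLineGraph W where
  toEquiv := ψ.toEquiv.prodCongr ψ.toEquiv
  map_rel_iff' := by
    simp [rectLineGraph, Prod.ext_iff, ← map_add]

end rectLineGraph

section FieldWithFourElements

variable {F : Type*} [Field F] [Fintype F]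

lemma two_eq_zero_of_card_eq_four (hF : Fintype.card F = 4) : (2 : F) = 0 := by
  have h4 : ((Fintype.card F : ℕ) : F) = 0 := FiniteField.cast_card_eq_zero F
  rw [hF] at h4
  exact mul_self_eq_zero.mp (by norm_num at h4 ⊢; linear_combination h4)

lemma sq_add_self_add_one_eq_zero_iff (hF : Fintype.card F = 4) (t : F) :
    t ^ 2 + t + 1 = 0 ↔ t ≠ 0 ∧ t ≠ 1 := by
  have h2 := two_eq_zero_of_card_eq_four hF
  constructor
  · intro h
    refine ⟨fun ht => ?_, fun ht => ?_⟩ <;> subst ht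
    · simp at h
    · exact one_ne_zero (by linear_combination h - h2)
  · rintro ⟨ht0, ht1⟩
    have ht : t * (t - 1) * (t ^ 2 + t + 1) = 0 := by
      linear_combination (hF ▸ FiniteField.pow_card t : t ^ 4 = t)
    simpa [ht0, sub_ne_zero.mpr ht1] using ht

lemma exists_sq_add_self_add_one_eq_zero (hF : Fintype.card F = 4) :
    ∃ ω : F, ω ^ 2 + ω + 1 = 0 := by
  obtain ⟨ω, -, hω⟩ := Finset.exists_mem_notMem_of_card_lt_card
    (s := ({0, 1} : Finset F)) (t := Finset.univ)
    (by rw [Finset.card_univ, hF]; exact Finset.card_le_two.trans_lt (by norm_num))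
  exact ⟨ω, (sq_add_self_add_one_eq_zero_iff hF ω).mpr (by simpa [not_or] using hω)⟩

lemma sq_add_mul_add_sq_ne_zero_iff (hF : Fintype.card F = 4) (p : F × F) :
    p.1 ^ 2 + p.1 * p.2 + p.2 ^ 2 ≠ 0 ↔ p ≠ 0 ∧ (p.1 = 0 ∨ p.1 + p.2 = 0 ∨ p.2 = 0) := by
  obtain ⟨d, e⟩ := p
  have h2 := two_eq_zero_of_card_eq_four hF
  by_cases hd : d = 0
  · simp [hd, Prod.ext_iff]
  · obtain ⟨t, rfl⟩ : ∃ t, e = t * d := ⟨e / d, by field_simp⟩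
    have hsum : d + t * d = 0 ↔ t = 1 := by
      rw [show d + t * d = (t - 1) * d by linear_combination d * h2, mul_eq_zero, sub_eq_zero]
      simp [hd]
    have hform : d ^ 2 + d * (t * d) + (t * d) ^ 2 = d ^ 2 * (t ^ 2 + t + 1) := by ring
    rw [ne_eq, hform, hsum, mul_eq_zero_iff_left (pow_ne_zero 2 hd),
      sq_add_self_add_one_eq_zero_iff hF]
    simp [hd, Prod.ext_iff]
    tauto

theorem rectLineGraph_iso_tensorProd_top (hF : Fintype.card F = 4) :
    Nonempty (rectLineGraph F ≃g tensorProd (⊤ : SimpleGraph F) (⊤ : SimpleGraph F)) := by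
  have h2 := two_eq_zero_of_card_eq_four hF
  obtain ⟨ω, hω⟩ := exists_sq_add_self_add_one_eq_zero hF
  -- Since `ω² = ω + 1`, the two coordinates `h + ω g` and `h + ω² g` multiply to the norm form
  -- `g² + g h + h²`, which vanishes exactly on the non-adjacent differences.
  refine ⟨{
    toFun x := (x.2 + ω * x.1, x.2 + (ω + 1) * x.1)
    invFun y := (y.2 - y.1, y.1 - ω * (y.2 - y.1))
    left_inv x := by ext <;> ring
    right_inv y := by ext <;> ring
    map_rel_iff' {x y} := ?_ }⟩
  have hnorm : ((x.2 + ω * x.1) - (y.2 + ω * y.1)) *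
      ((x.2 + (ω + 1) * x.1) - (y.2 + (ω + 1) * y.1)) =
        (x - y).1 ^ 2 + (x - y).1 * (x - y).2 + (x - y).2 ^ 2 := by
    simp only [Prod.fst_sub, Prod.snd_sub]
    linear_combination (x.1 - y.1) ^ 2 * hω +
      (ω * (x.1 - y.1) * (x.2 - y.2) - (x.1 - y.1) ^ 2) * h2
  simp only [Equiv.coe_fn_mk, tensorProd, SimpleGraph.top_adj, ne_eq,
    ← sub_eq_zero (a := x.2 + _)]
  rw [← not_or, ← mul_eq_zero, ← ne_eq, hnorm, sq_add_mul_add_sq_ne_zero_iff hF,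
    rectLineGraph.adj_iff_sub]

end FieldWithFourElements

/-- The graph of lines of `L_2^2` (16 vertices, 9-regular, strongly regular
with λ = 4, μ = 6) is isomorphic to the tensor product `K₄ × K₄`. -/
theorem stmt18 :
    Nonempty (L2kGraph 2 ≃g
      tensorProd (⊤ : SimpleGraph (Fin 4)) (⊤ : SimpleGraph (Fin 4))) := by
  let F := GaloisField 2 2
  let _ : Fintype F := Fintype.ofFinite F
  have hF : Fintype.card F = 4 := by
    rw [← Nat.card_eq_fintype_card, GaloisField.card 2 2 two_ne_zero]
    norm_num
  have hdim : Module.finrank (ZMod 2) (Fin 2 → ZMod 2) = Module.finrank (ZMod 2) F := by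
    rw [Module.finrank_fin_fun, GaloisField.finrank 2 two_ne_zero]
  let ψ : (Fin 2 → ZMod 2) ≃+ F := (LinearEquiv.ofFinrankEq _ _ hdim).toAddEquiv
  let σ : F ≃ Fin 4 := Fintype.equivFinOfCardEq hF
  obtain ⟨Φ⟩ := rectLineGraph_iso_tensorProd_top hF
  rw [L2kGraph_eq_rectLineGraph]
  exact ⟨((rectLineGraph.congr ψ).trans Φ).trans
    (tensorProd.congr (.completeGraph σ) (.completeGraph σ))⟩
end
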